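/- arXiv:0710.3871 — 8 statements merged into one kernel-verified Lean document; each statement's English description precedes it below -/
import Mathlib

section
/- Let A be a metabelian Lie algebra over a field k and let I₁ and I₂ be Lie ideals of A that are nilpotent of nilpotency classes n₁ and n₂ respectively (i.e. the lower central series of Iⱼ, viewed as a Lie algebra, vanishes at step nⱼ). Then the Lie ideal I₁ ⊔ I₂ generated by I₁ and I₂ is nilpotent, of nilpotency class at most 2·max(n₁, n₂). -/
/-!
Fitting's theorem. Write `I^p` for the ideal spanned by brackets of `p` elements of `I`
(with `I^0 = ⊤`), so that `I` is nilpotent of class `n` iff `I^(n+1) = 0`. A bracket of `m` elements of `I₁ ⊔ I₂`, `p` of them from `I₁` and `q` from `I₂`,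
lies in `I₁^p ⊓ I₂^q`, because each `I^p` is an ideal of the whole algebra. Hence
`(I₁ ⊔ I₂)^m ≤ ⨆_{p+q=m} I₁^p ⊓ I₂^q`, which vanishes once `m ≥ n₁ + n₂ + 1`.
-/

/-- A Lie ring `A` is *metabelian* if `⁅⁅a,b⁆,⁅c,d⁆⁆ = 0` for all `a b c d`. -/
def IsMetabelian (A : Type*) [LieRing A] : Prop :=
  ∀ a b c d : A, ⁅⁅a, b⁆, ⁅c, d⁆⁆ = 0

namespace LieIdeal

open Finset.HasAntidiagonal

variable {R L : Type*} [CommRing R] [LieRing L] [LieAlgebra R L]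

def bracketPow (I : LieIdeal R L) : ℕ → LieIdeal R L
  | 0 => ⊤
  | 1 => I
  | p + 2 => ⁅I, bracketPow I (p + 1)⁆

variable (I J : LieIdeal R L)

@[simp] lemma bracketPow_zero : I.bracketPow 0 = ⊤ := rfl

@[simp] lemma bracketPow_one : I.bracketPow 1 = I := rfl

lemma bracketPow_succ_succ (p : ℕ) :
    I.bracketPow (p + 2) = ⁅I, I.bracketPow (p + 1)⁆ := rfl

lemma lie_bracketPow_le_bracketPow_succ (p : ℕ) : ⁅I, I.bracketPow p⁆ ≤ I.bracketPow (p + 1) :=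
  match p with
  | 0 => LieSubmodule.lie_le_left I ⊤
  | _ + 1 => le_rfl

lemma lie_bracketPow_le (p : ℕ) : ⁅J, I.bracketPow p⁆ ≤ I.bracketPow p :=
  LieSubmodule.lie_le_right _ J

lemma bracketPow_antitone : Antitone I.bracketPow :=
  antitone_nat_of_succ_le fun
    | 0 => le_top
    | p + 1 => lie_bracketPow_le I I (p + 1)

lemma map_incl_lcs (n : ℕ) :
    (I.lcs I n).map (LieSubmodule.incl (I : LieSubmodule R L L)) = I.bracketPow (n + 1) := by
  induction n with
  | zero => rw [lcs_zero, LieSubmodule.map_incl_top, bracketPow_one]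
  | succ n ih => rw [lcs_succ, LieSubmodule.map_bracket_eq, ih, bracketPow_succ_succ]

lemma lowerCentralSeries_eq_bot_iff_bracketPow_eq_bot (n : ℕ) :
    LieModule.lowerCentralSeries R I I n = ⊥ ↔ I.bracketPow (n + 1) = ⊥ := by
  rw [← LieSubmodule.toSubmodule_eq_bot, ← coe_lcs_eq, LieSubmodule.toSubmodule_eq_bot,
    ← map_incl_lcs, ← LieSubmodule.map_bot (f := LieSubmodule.incl (I : LieSubmodule R L L)),
    (LieSubmodule.map_injective_of_injective (LieSubmodule.injective_incl _)).eq_iff]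

lemma lie_finset_sup {ι : Type*} (s : Finset ι) (f : ι → LieIdeal R L) :
    ⁅I, s.sup f⁆ = s.sup fun i => ⁅I, f i⁆ :=
  Finset.apply_sup_eq_sup_comp (fun N => ⁅I, N⁆) (fun _ _ => LieSubmodule.lie_sup ..)
    (LieSubmodule.lie_bot I)

lemma bracketPow_sup_le (I₁ I₂ : LieIdeal R L) : ∀ m : ℕ,
    (I₁ ⊔ I₂).bracketPow m ≤
      (antidiagonal m).sup fun pq => I₁.bracketPow pq.1 ⊓ I₂.bracketPow pq.2
  | 0 => by simp
  | 1 => sup_le (Finset.le_sup_of_le (b := (1, 0)) (by simp) (by simp))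
      (Finset.le_sup_of_le (b := (0, 1)) (by simp) (by simp))
  | m + 2 => by
    set S := fun m : ℕ => (antidiagonal m).sup fun pq => I₁.bracketPow pq.1 ⊓ I₂.bracketPow pq.2
    have h₁ : ⁅I₁, S (m + 1)⁆ ≤ S (m + 2) := by
      rw [lie_finset_sup]
      refine Finset.sup_le fun ⟨p, q⟩ hpq => Finset.le_sup_of_le (b := (p + 1, q)) ?_ ?_
      · rw [mem_antidiagonal] at hpq ⊢; omega
      · exact (LieSubmodule.lie_inf ..).trans
          (inf_le_inf (lie_bracketPow_le_bracketPow_succ ..) (lie_bracketPow_le ..))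
    have h₂ : ⁅I₂, S (m + 1)⁆ ≤ S (m + 2) := by
      rw [lie_finset_sup]
      refine Finset.sup_le fun ⟨p, q⟩ hpq => Finset.le_sup_of_le (b := (p, q + 1)) ?_ ?_
      · rw [mem_antidiagonal] at hpq ⊢; omega
      · exact (LieSubmodule.lie_inf ..).trans
          (inf_le_inf (lie_bracketPow_le ..) (lie_bracketPow_le_bracketPow_succ ..))
    calc (I₁ ⊔ I₂).bracketPow (m + 2) ≤ ⁅I₁ ⊔ I₂, S (m + 1)⁆ :=
          LieSubmodule.mono_lie_right _ (bracketPow_sup_le I₁ I₂ (m + 1))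
      _ = ⁅I₁, S (m + 1)⁆ ⊔ ⁅I₂, S (m + 1)⁆ := LieSubmodule.sup_lie ..
      _ ≤ S (m + 2) := sup_le h₁ h₂

lemma bracketPow_sup_eq_bot {I₁ I₂ : LieIdeal R L} {a b m : ℕ} (h₁ : I₁.bracketPow a = ⊥)
    (h₂ : I₂.bracketPow b = ⊥) (hm : a + b ≤ m + 1) : (I₁ ⊔ I₂).bracketPow m = ⊥ := by
  refine eq_bot_iff.2 ((bracketPow_sup_le I₁ I₂ m).trans (Finset.sup_le fun ⟨p, q⟩ hpq => ?_))
  rw [mem_antidiagonal] at hpq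
  rcases le_or_gt a p with hp | hp
  · exact inf_le_left.trans ((bracketPow_antitone I₁ hp).trans h₁.le)
  · exact inf_le_right.trans ((bracketPow_antitone I₂ (by omega : b ≤ q)).trans h₂.le)

end LieIdeal

theorem sup_nilpotent_of_nilpotent_general {k A : Type*} [Field k] [LieRing A] [LieAlgebra k A]
    (I₁ I₂ : LieIdeal k A) (n₁ n₂ : ℕ)
    (h₁ : LieModule.lowerCentralSeries k ↥I₁ ↥I₁ n₁ = ⊥)
    (h₂ : LieModule.lowerCentralSeries k ↥I₂ ↥I₂ n₂ = ⊥) :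
    LieModule.lowerCentralSeries k ↥(I₁ ⊔ I₂) ↥(I₁ ⊔ I₂) (2 * max n₁ n₂) = ⊥ := by
  rw [LieIdeal.lowerCentralSeries_eq_bot_iff_bracketPow_eq_bot] at h₁ h₂ ⊢
  exact LieIdeal.bracketPow_sup_eq_bot h₁ h₂ (by omega)

/-- In a metabelian Lie algebra, the Lie ideal generated by two nilpotent Lie ideals of
nilpotency classes `n₁` and `n₂` is nilpotent of class at most `2 * max n₁ n₂`. -/
theorem sup_nilpotent_of_nilpotent {k A : Type*} [Field k] [LieRing A] [LieAlgebra k A]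
    (hA : IsMetabelian A) (I₁ I₂ : LieIdeal k A) (n₁ n₂ : ℕ)
    (h₁ : LieModule.lowerCentralSeries k ↥I₁ ↥I₁ n₁ = ⊥)
    (h₂ : LieModule.lowerCentralSeries k ↥I₂ ↥I₂ n₂ = ⊥) :
    LieModule.lowerCentralSeries k ↥(I₁ ⊔ I₂) ↥(I₁ ⊔ I₂) (2 * max n₁ n₂) = ⊥ :=
  sup_nilpotent_of_nilpotent_general I₁ I₂ n₁ n₂ h₁ h₂
end

section
/- Let C be a nilpotent metabelian Lie algebra over a field k that is not abelian (its nilpotency class is at least 2). Then there exist c₁, c₂ ∈ C such that ⁅c₁, c₂⁆ ≠ 0 and the Lie subalgebra D of C generated by {c₁, c₂} is nilpotent of class exactly 2, i.e. ⁅⁅x, y⁆, z⁆ = 0 for all x, y, z ∈ D while ⁅c₁, c₂⁆ ≠ 0. -/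
open LieAlgebra LieModule

section
variable {R L : Type*} [CommRing R] [LieRing L] [LieAlgebra R L]

theorem lie_smul_add_smul_pair (x y : L) (a b c d : R) :
    ⁅a • x + b • y, c • x + d • y⁆ = (a * d - b * c) • ⁅x, y⁆ := by
  simp only [lie_add, add_lie, lie_smul, smul_lie, lie_self, smul_zero, zero_add, add_zero,
    ← lie_skew y x, smul_neg, smul_smul]
  module

theorem lie_mem_center_of_mem_span_pair {x y u v : L} (h : ⁅x, y⁆ ∈ center R L)
    (hu : u ∈ Submodule.span R {x, y}) (hv : v ∈ Submodule.span R {x, y}) :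
    ⁅u, v⁆ ∈ center R L := by
  obtain ⟨a, b, rfl⟩ := Submodule.mem_span_pair.mp hu
  obtain ⟨c, d, rfl⟩ := Submodule.mem_span_pair.mp hv
  rw [lie_smul_add_smul_pair]
  exact (center R L).smul_mem _ h

theorem lie_add_of_mem_center {u v u' v' : L} (hu' : u' ∈ center R L) (hv' : v' ∈ center R L) :
    ⁅u + u', v + v'⁆ = ⁅u, v⁆ := by
  rw [lie_add, add_lie, add_lie, hv' u, hv' u', ← lie_skew u' v, hu' v]
  simp

theorem lie_mem_center_of_mem_sup_center {V : Submodule R L}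
    (hV : ∀ u ∈ V, ∀ v ∈ V, ⁅u, v⁆ ∈ center R L) {u v : L}
    (hu : u ∈ V ⊔ (center R L).toSubmodule) (hv : v ∈ V ⊔ (center R L).toSubmodule) :
    ⁅u, v⁆ ∈ center R L := by
  obtain ⟨u₀, hu₀, u', hu', rfl⟩ := Submodule.mem_sup.mp hu
  obtain ⟨v₀, hv₀, v', hv', rfl⟩ := Submodule.mem_sup.mp hv
  rw [lie_add_of_mem_center hu' hv']
  exact hV u₀ hu₀ v₀ hv₀

def LieSubalgebra.supCenter (V : Submodule R L) (hV : ∀ u ∈ V, ∀ v ∈ V, ⁅u, v⁆ ∈ center R L) :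
    LieSubalgebra R L :=
  { V ⊔ (center R L).toSubmodule with
    lie_mem' := fun hu hv ↦
      Submodule.mem_sup_right (lie_mem_center_of_mem_sup_center hV hu hv) }

theorem lie_mem_center_of_mem_lieSpan_pair {x y u v : L} (h : ⁅x, y⁆ ∈ center R L)
    (hu : u ∈ LieSubalgebra.lieSpan R L {x, y}) (hv : v ∈ LieSubalgebra.lieSpan R L {x, y}) :
    ⁅u, v⁆ ∈ center R L := by
  have hV : ∀ u ∈ Submodule.span R {x, y}, ∀ v ∈ Submodule.span R {x, y}, ⁅u, v⁆ ∈ center R L :=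
    fun _ hu _ hv ↦ lie_mem_center_of_mem_span_pair h hu hv
  have hle : LieSubalgebra.lieSpan R L {x, y} ≤ LieSubalgebra.supCenter _ hV :=
    LieSubalgebra.lieSpan_le.mpr fun w hw ↦ Submodule.mem_sup_left (Submodule.subset_span hw)
  exact lie_mem_center_of_mem_sup_center hV (hle hu) (hle hv)

variable (R) in
theorem exists_lie_ne_zero_mem_center [LieRing.IsNilpotent L] (h : ¬ IsLieAbelian L) :
    ∃ x y : L, ⁅x, y⁆ ≠ 0 ∧ ⁅x, y⁆ ∈ center R L := by
  have h2 : 2 ≤ nilpotencyLength L L :=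
    not_le.mp (mt (isTrivial_of_nilpotencyLength_le_one L L) h)
  obtain ⟨k, hk⟩ := Nat.exists_eq_add_of_le' h2
  obtain ⟨hbot, hne⟩ := (nilpotencyLength_eq_succ_iff R L L (k + 1)).mp hk
  rw [lowerCentralSeries_succ, ne_eq, LieSubmodule.lie_eq_bot_iff] at hne
  push Not at hne
  obtain ⟨x, -, y, hy, hxy⟩ := hne
  refine ⟨x, y, hxy, (mem_maxTrivSubmodule R L L _).mpr fun z ↦ ?_⟩
  rw [← LieSubmodule.mem_bot (R := R) (L := L), ← hbot, lowerCentralSeries_succ,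
    lowerCentralSeries_succ]
  exact LieSubmodule.lie_mem_lie (LieSubmodule.mem_top z)
    (LieSubmodule.lie_mem_lie (LieSubmodule.mem_top x) hy)

end

theorem exists_two_generated_class_two_general {k C : Type*} [Field k] [LieRing C] [LieAlgebra k C]
    [LieRing.IsNilpotent C]
    (hnab : ¬ ∀ x y : C, ⁅x, y⁆ = 0) :
    ∃ c₁ c₂ : C, ⁅c₁, c₂⁆ ≠ 0 ∧
      ∀ x y z : C,
        x ∈ LieSubalgebra.lieSpan k C {c₁, c₂} →
        y ∈ LieSubalgebra.lieSpan k C {c₁, c₂} →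
        z ∈ LieSubalgebra.lieSpan k C {c₁, c₂} →
        ⁅⁅x, y⁆, z⁆ = 0 := by
  obtain ⟨c₁, c₂, hne, hcenter⟩ := exists_lie_ne_zero_mem_center k (fun h ↦ hnab h.trivial)
  refine ⟨c₁, c₂, hne, fun x y z hx hy _ ↦ ?_⟩
  rw [← lie_skew, lie_mem_center_of_mem_lieSpan_pair hcenter hx hy z, neg_zero]

/-- A non-abelian nilpotent metabelian Lie algebra contains a 2-generated subalgebra of
nilpotency class exactly 2. -/
theorem exists_two_generated_class_two {k C : Type*} [Field k] [LieRing C] [LieAlgebra k C]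
    (hC : IsMetabelian C) [LieRing.IsNilpotent C]
    (hnab : ¬ ∀ x y : C, ⁅x, y⁆ = 0) :
    ∃ c₁ c₂ : C, ⁅c₁, c₂⁆ ≠ 0 ∧
      ∀ x y z : C,
        x ∈ LieSubalgebra.lieSpan k C {c₁, c₂} →
        y ∈ LieSubalgebra.lieSpan k C {c₁, c₂} →
        z ∈ LieSubalgebra.lieSpan k C {c₁, c₂} →
        ⁅⁅x, y⁆, z⁆ = 0 :=
  exists_two_generated_class_two_general hnab
end

section
/- Let A be a metabelian Lie algebra over a field k and let a ∈ A be an element that commutes with every element of the derived ideal, i.e. ⁅a, ⁅x, y⁆⁆ = 0 for all x, y ∈ A. Then a lies in the Fitting radical Fit(A). -/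
/-- The Fitting radical of a Lie algebra: the supremum of all nilpotent Lie ideals,
i.e. the Lie ideal generated by the union of all nilpotent Lie ideals. -/
noncomputable def fittingRadical (k A : Type*) [CommRing k] [LieRing A] [LieAlgebra k A] :
    LieIdeal k A :=
  sSup {I : LieIdeal k A | LieRing.IsNilpotent I}

section

open LieAlgebra

variable {R L : Type*} [CommRing R] [LieRing L] [LieAlgebra R L]

theorem lie_mem_derivedSeries_one (x y : L) : ⁅x, y⁆ ∈ derivedSeries R L 1 :=
  LieSubmodule.lie_mem_lie (LieSubmodule.mem_top x) (LieSubmodule.mem_top y)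

theorem lie_eq_zero_of_mem_derivedSeries_one {z d : L} (hz : ∀ x y : L, ⁅z, ⁅x, y⁆⁆ = 0)
    (hd : d ∈ derivedSeries R L 1) : ⁅z, d⁆ = 0 := by
  have hle : (derivedSeries R L 1 : Submodule R L) ≤ LinearMap.ker (ad R L z) := by
    rw [coe_derivedSeries_one_eq, Submodule.span_le]
    rintro _ ⟨x, y, rfl⟩
    exact hz x y
  exact hle hd

theorem IsMetabelian.lie_eq_zero_of_mem_derivedSeries_one (hL : IsMetabelian L) {d e : L}
    (hd : d ∈ derivedSeries R L 1) (he : e ∈ derivedSeries R L 1) : ⁅d, e⁆ = 0 := by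
  have hd_central : ∀ x y : L, ⁅d, ⁅x, y⁆⁆ = 0 := fun x y => by
    rw [← lie_skew, _root_.lie_eq_zero_of_mem_derivedSeries_one (hL x y) hd, neg_zero]
  exact _root_.lie_eq_zero_of_mem_derivedSeries_one hd_central he

def LieIdeal.ofDerivedSeriesOneLE (p : Submodule R L)
    (hp : (derivedSeries R L 1 : Submodule R L) ≤ p) : LieIdeal R L where
  toSubmodule := p
  lie_mem {x m} _ := hp (lie_mem_derivedSeries_one x m)

theorem LieIdeal.le_fittingRadical (I : LieIdeal R L) [LieRing.IsNilpotent I] :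
    I ≤ fittingRadical R L :=
  le_sSup ‹LieRing.IsNilpotent I›

theorem isLieAbelian_span_singleton_sup_derivedSeries_one (hL : IsMetabelian L) {a : L}
    (ha : ∀ x y : L, ⁅a, ⁅x, y⁆⁆ = 0) :
    IsLieAbelian (LieIdeal.ofDerivedSeriesOneLE ((R ∙ a) ⊔ (derivedSeries R L 1 : Submodule R L))
      le_sup_right) := by
  rw [LieSubmodule.lie_abelian_iff_lie_self_eq_bot, LieSubmodule.lie_eq_bot_iff]
  intro x hx y hy
  obtain ⟨_, hs, d, hd, rfl⟩ := Submodule.mem_sup.mp hx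
  obtain ⟨_, hs', e, he, rfl⟩ := Submodule.mem_sup.mp hy
  obtain ⟨c, rfl⟩ := Submodule.mem_span_singleton.mp hs
  obtain ⟨c', rfl⟩ := Submodule.mem_span_singleton.mp hs'
  have hae : ⁅a, e⁆ = 0 := lie_eq_zero_of_mem_derivedSeries_one ha he
  have hda : ⁅d, a⁆ = 0 := by
    rw [← lie_skew, lie_eq_zero_of_mem_derivedSeries_one ha hd, neg_zero]
  have hde : ⁅d, e⁆ = 0 := IsMetabelian.lie_eq_zero_of_mem_derivedSeries_one hL hd he
  simp [hae, hda, hde]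

end

/-- In a metabelian Lie algebra, an element commuting with every element of the derived
ideal lies in the Fitting radical. -/
theorem mem_fittingRadical_of_commutes_with_derived {k A : Type*} [Field k] [LieRing A]
    [LieAlgebra k A] (hA : IsMetabelian A) (a : A)
    (h : ∀ x y : A, ⁅a, ⁅x, y⁆⁆ = 0) :
    a ∈ fittingRadical k A := by
  have := isLieAbelian_span_singleton_sup_derivedSeries_one (R := k) hA h
  exact LieIdeal.le_fittingRadical (LieIdeal.ofDerivedSeriesOneLE _ le_sup_right)
    (Submodule.mem_sup_left (Submodule.mem_span_singleton_self a))
end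

section
/- Let k be a field, let Λ be a linearly ordered type, and let F = F(k, Λ) be the free metabelian Lie algebra on Λ over k with generators a_i (i ∈ Λ). Call an element of F a normalised monomial if it is either a generator a_i, or a left-normed product ⁅…⁅⁅a_{i₁}, a_{i₂}⁆, a_{i₃}⁆, …, a_{i_m}⁆ with m ≥ 2 and i₁ > i₂ ≤ i₃ ≤ … ≤ i_m. Then the family of all normalised monomials (indexed by the corresponding index sequences) is a basis of F as a k-vector space: it is linearly independent and spans F. -/
/-- The free metabelian Lie algebra on `X` over `k`: the quotient of the free Lie algebra
on `X` by its second derived ideal `⁅⁅L,L⁆,⁅L,L⁆⁆`. -/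
abbrev FreeMetabelianLie (k : Type*) (X : Type*) [CommRing k] :=
  FreeLieAlgebra k X ⧸ LieAlgebra.derivedSeries k (FreeLieAlgebra k X) 2

/-- The image in the free metabelian Lie algebra of the generator `x`. -/
noncomputable def fmGen (k : Type*) {X : Type*} [CommRing k] (x : X) :
    FreeMetabelianLie k X :=
  LieSubmodule.Quotient.mk' _ (FreeLieAlgebra.of k x)

/-- The index type for normalised monomials of the free metabelian Lie algebra over a
linearly ordered set `Λ`: either a single generator `a_i`, or a tuple
`(i₁, i₂, [i₃, …, i_m])` with `i₁ > i₂ ≤ i₃ ≤ … ≤ i_m`. -/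
def NormIdx (Λ : Type*) [LinearOrder Λ] : Type _ :=
  Λ ⊕ {p : Λ × Λ × List Λ // p.2.1 < p.1 ∧ List.Pairwise (· ≤ ·) (p.2.1 :: p.2.2)}

/-- The normalised monomial of the free metabelian Lie algebra attached to an index: the
generator `a_i`, or the left-normed product `⁅…⁅⁅a_{i₁}, a_{i₂}⁆, a_{i₃}⁆, …, a_{i_m}⁆`. -/
noncomputable def normMono (k : Type*) (Λ : Type*) [CommRing k] [LinearOrder Λ] :
    NormIdx Λ → FreeMetabelianLie k Λ
  | Sum.inl i => fmGen k i
  | Sum.inr p =>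
      p.val.2.2.foldl (fun w c => ⁅w, fmGen k c⁆) ⁅fmGen k p.val.1, fmGen k p.val.2.1⁆

/-!
Spanning: in a metabelian Lie algebra `⁅⁅⁅x, y⁆, a⁆, b⁆ = ⁅⁅⁅x, y⁆, b⁆, a⁆`, so the left-normed
product `⁅…⁅⁅a_i, a_j⁆, a_{c₁}⁆, …, a_{c_r}⁆` only depends on the multiset of the `c`s. After
using antisymmetry to get `j < i` and sorting the `c`s, either `j ≤ c₁` and the product is
normalised, or the Jacobi identity `⁅⁅a_i, a_j⁆, a_c⁆ = ⁅⁅a_i, a_c⁆, a_j⁆ - ⁅⁅a_j, a_c⁆, a_i⁆` with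
`c = c₁` makes it a difference of two normalised monomials. Bracketing with a generator appends a
letter and two commutators commute, so the span of the normalised monomials is a Lie subalgebra
containing the generators.

Independence: send `a_i` to `(e_i, e_i)` in the metabelian Lie algebra `k^(Λ) × k[X_Λ]^(Λ)` with
bracket `⁅(v, m), (w, n)⁆ = (0, σ w • m - σ v • n)`, `σ v = ∑ vᵢ Xᵢ`. The monomial
`(i, j, c₁ … c_r)` goes to `(0, X_j X_c e_i - X_i X_c e_j)`, `X_c = X_{c₁} ⋯ X_{c_r}`. Its leading
term `X_j X_c e_i` determines it, as `j` is the least variable there, and is never a trailing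
term: in `X_i X_c e_j` the index `j` is at most every variable, in `X_j X_c e_i` the index `i`
exceeds `j`. So the coefficients at leading terms form a dual family.
-/

section LieAlgebra

variable {R L : Type*} [CommRing R] [LieRing L] [LieAlgebra R L]

open LieAlgebra LieSubmodule

theorem LieAlgebra.lie_lie_mem_derivedSeries_two (x y z w : L) :
    ⁅⁅x, y⁆, ⁅z, w⁆⁆ ∈ derivedSeries R L 2 := by
  rw [derivedSeries_def, derivedSeriesOfIdeal_succ, derivedSeriesOfIdeal_succ,
    derivedSeriesOfIdeal_zero]
  exact lie_mem_lie (lie_mem_lie (mem_top x) (mem_top y)) (lie_mem_lie (mem_top z) (mem_top w))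

theorem LieAlgebra.derivedSeries_two_eq_bot_of_abelian_ideal (I : LieIdeal R L)
    (h_lie : ∀ x y : L, ⁅x, y⁆ ∈ I) (h_abelian : ∀ x ∈ I, ∀ y ∈ I, ⁅x, y⁆ = 0) :
    derivedSeries R L 2 = ⊥ := by
  have h_one : derivedSeries R L 1 ≤ I := by
    rw [derivedSeries_def, derivedSeriesOfIdeal_succ, derivedSeriesOfIdeal_zero, lie_le_iff]
    exact fun x _ y _ ↦ h_lie x y
  have h_two : derivedSeries R L 2 = ⁅derivedSeries R L 1, derivedSeries R L 1⁆ :=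
    derivedSeriesOfIdeal_succ ..
  rw [h_two, ← le_bot_iff, ← (lie_eq_bot_iff I I).2 h_abelian]
  exact mono_lie h_one h_one

theorem LieSubalgebra.coe_lieSpan_eq_span_of_forall_lie_mem {s : Set L}
    (hs : ∀ x ∈ s, ∀ y ∈ s, ⁅x, y⁆ ∈ Submodule.span R s) :
    (LieSubalgebra.lieSpan R L s : Set L) = Submodule.span R s := by
  suffices h : ∀ {x y}, x ∈ Submodule.span R s → y ∈ Submodule.span R s →
      ⁅x, y⁆ ∈ Submodule.span R s by
    refine le_antisymm ?_ (LieSubalgebra.submodule_span_le_lieSpan (R := R) (L := L))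
    change _ ≤ (({ Submodule.span R s with lie_mem' := h } : LieSubalgebra R L) : Set L)
    exact (LieSubalgebra.lieSpan_le).2 Submodule.subset_span
  intro x y hx hy
  induction hx, hy using Submodule.span_induction₂ with
  | mem_mem x y hx hy => exact hs x hx y hy
  | zero_left y _ => simp
  | zero_right x _ => simp
  | add_left x y z _ _ _ hx hy => simpa [add_lie] using add_mem hx hy
  | add_right x y z _ _ _ hx hy => simpa [lie_add] using add_mem hx hy
  | smul_left r x y _ _ h => simpa [smul_lie] using Submodule.smul_mem _ r h
  | smul_right r x y _ _ h => simpa [lie_smul] using Submodule.smul_mem _ r h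

theorem FreeLieAlgebra.lieSpan_range_of (X : Type*) :
    LieSubalgebra.lieSpan R (FreeLieAlgebra R X) (Set.range (of R)) = ⊤ := by
  set S := LieSubalgebra.lieSpan R (FreeLieAlgebra R X) (Set.range (of R))
  let f : FreeLieAlgebra R X →ₗ⁅R⁆ S :=
    lift R fun x ↦ ⟨of R x, LieSubalgebra.subset_lieSpan (Set.mem_range_self x)⟩
  have hf : S.incl.comp f = LieHom.id := hom_ext fun x ↦ by simp [f]
  refine eq_top_iff.2 fun y _ ↦ ?_
  rw [← LieHom.id_apply (R := R) y, ← hf]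
  exact (f y).2

end LieAlgebra

theorem LinearIndependent.of_dual_family {R M ι : Type*} [Semiring R] [AddCommMonoid M]
    [Module R M] {v : ι → M} (φ : ι → M →ₗ[R] R) (h_same : ∀ i, φ i (v i) = 1)
    (h_ne : Pairwise fun i j ↦ φ i (v j) = 0) : LinearIndependent R v := by
  classical
  have h : ⇑(LinearMap.pi φ) ∘ v = fun j ↦ Pi.single j 1 := by
    ext j i
    rcases eq_or_ne i j with rfl | hij
    · simp [h_same]
    · simp [h_ne hij, hij]
  exact .of_comp (LinearMap.pi φ) (h ▸ Pi.linearIndependent_single_one ι R)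

section LeftNormed

variable {ι L : Type*} [LieRing L] (g : ι → L)

def leftNormed (x : L) (l : List ι) : L :=
  l.foldl (fun w c ↦ ⁅w, g c⁆) x

@[simp]
theorem leftNormed_nil (x : L) : leftNormed g x [] = x := rfl

@[simp]
theorem leftNormed_cons (x : L) (c : ι) (l : List ι) :
    leftNormed g x (c :: l) = leftNormed g ⁅x, g c⁆ l := rfl

theorem leftNormed_append_singleton (x : L) (l : List ι) (c : ι) :
    leftNormed g x (l ++ [c]) = ⁅leftNormed g x l, g c⁆ :=
  List.foldl_concat ..

theorem leftNormed_sub (x y : L) (l : List ι) :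
    leftNormed g (x - y) l = leftNormed g x l - leftNormed g y l := by
  induction l generalizing x y <;> simp [sub_lie, *]

theorem leftNormed_zero (l : List ι) : leftNormed g 0 l = 0 := by
  simpa using leftNormed_sub g 0 0 l

theorem leftNormed_neg (x : L) (l : List ι) : leftNormed g (-x) l = -leftNormed g x l := by
  simpa [leftNormed_zero] using leftNormed_sub g 0 x l

theorem leftNormed_lie_cons (i j c : ι) (l : List ι) :
    leftNormed g ⁅g i, g j⁆ (c :: l) =
      leftNormed g ⁅g i, g c⁆ (j :: l) - leftNormed g ⁅g j, g c⁆ (i :: l) := by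
  rw [leftNormed_cons, leftNormed_cons, leftNormed_cons, ← leftNormed_sub, lie_lie,
    ← lie_skew ⁅g i, g c⁆, ← lie_skew ⁅g j, g c⁆, neg_sub_neg]

theorem LieHom.map_leftNormed {R L' : Type*} [CommRing R] [LieAlgebra R L] [LieRing L']
    [LieAlgebra R L'] (f : L →ₗ⁅R⁆ L') (x : L) (l : List ι) :
    f (leftNormed g x l) = leftNormed (f ∘ g) (f x) l := by
  induction l generalizing x <;> simp [*]

variable {g}

theorem exists_leftNormed_lie_eq_lie (x y : L) (l : List ι) :
    ∃ u v : L, leftNormed g ⁅x, y⁆ l = ⁅u, v⁆ := by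
  induction l generalizing x y with
  | nil => exact ⟨x, y, rfl⟩
  | cons c l ih => exact ih ..

variable (hL : ∀ a b c d : L, ⁅⁅a, b⁆, ⁅c, d⁆⁆ = 0)
include hL

theorem lie_lie_lie_comm_of_metabelian (x y a b : L) : ⁅⁅⁅x, y⁆, a⁆, b⁆ = ⁅⁅⁅x, y⁆, b⁆, a⁆ := by
  have h := leibniz_lie ⁅x, y⁆ a b
  rwa [hL, ← lie_skew a, ← sub_eq_add_neg, eq_comm, sub_eq_zero] at h

theorem leftNormed_lie_perm {l l' : List ι} (h : l.Perm l') (x y : L) :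
    leftNormed g ⁅x, y⁆ l = leftNormed g ⁅x, y⁆ l' := by
  induction h generalizing x y with
  | nil => rfl
  | cons c _ ih => exact ih ..
  | swap a b l => simp only [leftNormed_cons, lie_lie_lie_comm_of_metabelian hL]
  | trans _ _ ih₁ ih₂ => rw [ih₁, ih₂]

theorem lie_leftNormed_lie_eq_zero (x y z w : L) (l l' : List ι) :
    ⁅leftNormed g ⁅x, y⁆ l, leftNormed g ⁅z, w⁆ l'⁆ = 0 := by
  obtain ⟨a, b, hab⟩ := exists_leftNormed_lie_eq_lie (g := g) x y l
  obtain ⟨c, d, hcd⟩ := exists_leftNormed_lie_eq_lie (g := g) z w l'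
  rw [hab, hcd, hL]

end LeftNormed

namespace FreeMetabelianLie

open LieAlgebra

variable (k : Type*) {X : Type*} [CommRing k]

noncomputable def mk : FreeLieAlgebra k X →ₗ⁅k⁆ FreeMetabelianLie k X where
  __ := (derivedSeries k (FreeLieAlgebra k X) 2).toSubmodule.mkQ
  map_lie' := LieSubmodule.Quotient.mk_bracket ..

theorem mk_surjective : Function.Surjective (mk k (X := X)) :=
  LieSubmodule.Quotient.surjective_mk' _

theorem derivedSeries_two_eq_bot : derivedSeries k (FreeMetabelianLie k X) 2 = ⊥ := by
  rw [← LieIdeal.derivedSeries_map_eq 2 (mk_surjective k), LieIdeal.map_eq_bot_iff]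
  intro x hx
  exact (LieSubmodule.Quotient.mk_eq_zero' (N := derivedSeries k (FreeLieAlgebra k X) 2)).2 hx

theorem lie_lie_lie_lie_eq_zero (a b c d : FreeMetabelianLie k X) : ⁅⁅a, b⁆, ⁅c, d⁆⁆ = 0 := by
  have h := lie_lie_mem_derivedSeries_two (R := k) a b c d
  rwa [derivedSeries_two_eq_bot, LieSubmodule.mem_bot] at h

variable {k} {L : Type*} [LieRing L] [LieAlgebra k L]

noncomputable def lift (hL : derivedSeries k L 2 = ⊥) (f : X → L) :
    FreeMetabelianLie k X →ₗ⁅k⁆ L where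
  __ := (derivedSeries k (FreeLieAlgebra k X) 2).toSubmodule.liftQ
    (FreeLieAlgebra.lift k f).toLinearMap fun x hx ↦ by
      have h := LieIdeal.derivedSeries_map_le 2 (LieIdeal.mem_map (f := FreeLieAlgebra.lift k f) hx)
      rwa [hL, LieSubmodule.mem_bot] at h
  map_lie' {x y} := by
    obtain ⟨a, rfl⟩ := mk_surjective k x
    obtain ⟨b, rfl⟩ := mk_surjective k y
    rw [← LieHom.map_lie]
    exact LieHom.map_lie (FreeLieAlgebra.lift k f) a b

@[simp]
theorem lift_fmGen (hL : derivedSeries k L 2 = ⊥) (f : X → L) (x : X) :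
    lift hL f (fmGen k x) = f x :=
  FreeLieAlgebra.lift_of_apply ..

variable (k X) in
theorem lieSpan_range_fmGen :
    LieSubalgebra.lieSpan k (FreeMetabelianLie k X) (Set.range (fmGen k)) = ⊤ := by
  have h : Set.range (fmGen k) = mk k '' Set.range (FreeLieAlgebra.of k (X := X)) :=
    Set.range_comp ..
  rw [h, ← LieSubalgebra.map_lieSpan, FreeLieAlgebra.lieSpan_range_of, ← LieSubalgebra.map_top,
    (mk k).range_eq_top.2 (mk_surjective k)]

section Spanning

variable (k) {Λ : Type*} [LinearOrder Λ]

theorem leftNormed_mem_span_normMono_of_le {i j : Λ} {l : List Λ} (hji : j < i)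
    (hl : ∀ c ∈ l, j ≤ c) :
    leftNormed (fmGen k) ⁅fmGen k i, fmGen k j⁆ l ∈
      Submodule.span k (Set.range (normMono k Λ)) := by
  have hsort := List.perm_insertionSort (· ≤ ·) l
  rw [leftNormed_lie_perm (lie_lie_lie_lie_eq_zero k) hsort.symm]
  refine Submodule.subset_span ⟨.inr ⟨(i, j, l.insertionSort (· ≤ ·)), hji, ?_⟩, rfl⟩
  exact List.pairwise_cons.2 ⟨fun c hc ↦ hl c (hsort.subset hc), List.pairwise_insertionSort _ _⟩

theorem leftNormed_mem_span_normMono (i j : Λ) (l : List Λ) :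
    leftNormed (fmGen k) ⁅fmGen k i, fmGen k j⁆ l ∈
      Submodule.span k (Set.range (normMono k Λ)) := by
  wlog hji : j < i generalizing i j
  · rcases (not_lt.1 hji).eq_or_lt with rfl | hij
    · simp [leftNormed_zero]
    · rw [← lie_skew, leftNormed_neg]
      exact neg_mem (this j i hij)
  have hsort := List.perm_insertionSort (· ≤ ·) l
  rw [leftNormed_lie_perm (lie_lie_lie_lie_eq_zero k) hsort.symm]
  rcases hl' : l.insertionSort (· ≤ ·) with _ | ⟨c, l'⟩
  · exact leftNormed_mem_span_normMono_of_le k hji (by simp)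
  have hc : ∀ d ∈ l', c ≤ d :=
    fun _ ↦ List.rel_of_pairwise_cons (hl' ▸ List.pairwise_insertionSort _ l)
  rcases le_or_gt j c with hjc | hjc
  · exact leftNormed_mem_span_normMono_of_le k hji
      (List.forall_mem_cons.2 ⟨hjc, fun d hd ↦ hjc.trans (hc d hd)⟩)
  -- `c < j < i`: the Jacobi identity moves the least letter `c` into second position
  rw [leftNormed_lie_cons]
  exact sub_mem
    (leftNormed_mem_span_normMono_of_le k (hjc.trans hji) (List.forall_mem_cons.2 ⟨hjc.le, hc⟩))
    (leftNormed_mem_span_normMono_of_le k hjc (List.forall_mem_cons.2 ⟨(hjc.trans hji).le, hc⟩))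

theorem lie_normMono_fmGen_mem_span (q : NormIdx Λ) (c : Λ) :
    ⁅normMono k Λ q, fmGen k c⁆ ∈ Submodule.span k (Set.range (normMono k Λ)) := by
  rcases q with i | ⟨⟨i, j, l⟩, _⟩
  · exact leftNormed_mem_span_normMono k i c []
  · change ⁅leftNormed (fmGen k) ⁅fmGen k i, fmGen k j⁆ l, fmGen k c⁆ ∈ _
    rw [← leftNormed_append_singleton]
    exact leftNormed_mem_span_normMono k i j (l ++ [c])

theorem lie_normMono_mem_span (q q' : NormIdx Λ) :
    ⁅normMono k Λ q, normMono k Λ q'⁆ ∈ Submodule.span k (Set.range (normMono k Λ)) := by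
  rcases q' with c | ⟨⟨i', j', l'⟩, _⟩
  · exact lie_normMono_fmGen_mem_span k q c
  rcases q with c | ⟨⟨i, j, l⟩, _⟩
  · rw [← lie_skew]
    exact neg_mem (lie_normMono_fmGen_mem_span k _ c)
  · convert Submodule.zero_mem _
    exact lie_leftNormed_lie_eq_zero (lie_lie_lie_lie_eq_zero k) _ _ _ _ l l'

theorem span_normMono_eq_top : Submodule.span k (Set.range (normMono k Λ)) = ⊤ := by
  have h_span := LieSubalgebra.coe_lieSpan_eq_span_of_forall_lie_mem (R := k)
    (s := Set.range (normMono k Λ))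
    (by rintro _ ⟨q, rfl⟩ _ ⟨q', rfl⟩; exact lie_normMono_mem_span k q q')
  refine eq_top_iff.2 fun x _ ↦ ?_
  have hx : x ∈ LieSubalgebra.lieSpan k _ (Set.range (normMono k Λ)) :=
    LieSubalgebra.lieSpan_mono
      ((Set.range_subset_iff (s := Set.range (normMono k Λ))).2 fun i ↦ ⟨.inl i, rfl⟩)
      (lieSpan_range_fmGen k Λ ▸ LieSubalgebra.mem_top x)
  rwa [← SetLike.mem_coe, h_span] at hx

end Spanning

end FreeMetabelianLie

theorem MvPolynomial.prod_map_X_eq_monomial {σ R : Type*} [CommSemiring R] [DecidableEq σ]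
    (l : List σ) :
    (l.map (X : σ → MvPolynomial σ R)).prod =
      monomial (Multiset.toFinsupp (l : Multiset σ)) 1 := by
  induction l with
  | nil => simp
  | cons a l ih =>
    rw [List.map_cons, List.prod_cons, ih, ← Multiset.cons_coe, ← Multiset.singleton_add,
      map_add, Multiset.toFinsupp_singleton, X, monomial_mul, one_mul]

namespace NormIdx

variable {Λ : Type*} [LinearOrder Λ]

-- `⟨i, e⟩` stands for the term `X^e e_i` of `k[X_Λ]^(Λ)`.
noncomputable def lead : NormIdx Λ → Σ _ : Λ, Λ →₀ ℕ
  | .inl i => ⟨i, 0⟩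
  | .inr p => ⟨p.1.1, Multiset.toFinsupp ↑(p.1.2.1 :: p.1.2.2)⟩

noncomputable def trail
    (p : {p : Λ × Λ × List Λ // p.2.1 < p.1 ∧ List.Pairwise (· ≤ ·) (p.2.1 :: p.2.2)}) :
    Σ _ : Λ, Λ →₀ ℕ :=
  ⟨p.1.2.1, Multiset.toFinsupp ↑(p.1.1 :: p.1.2.2)⟩

theorem lead_injective : Function.Injective (lead (Λ := Λ)) := by
  rintro (i | ⟨⟨i, j, l⟩, hji, hl⟩) (i' | ⟨⟨i', j', l'⟩, hji', hl'⟩) h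
  · exact congrArg Sum.inl (congrArg Sigma.fst h)
  · exact absurd (congrArg Sigma.snd h).symm (by simp [lead])
  · exact absurd (congrArg Sigma.snd h) (by simp [lead])
  · obtain rfl : i = i' := congrArg Sigma.fst h
    have hperm : (j :: l).Perm (j' :: l') :=
      Multiset.coe_eq_coe.1 (Multiset.toFinsupp.injective (congrArg Sigma.snd h))
    obtain ⟨rfl, rfl⟩ := List.cons_eq_cons.1 (hperm.eq_of_pairwise' hl hl')
    rfl

theorem lead_ne_trail (q : NormIdx Λ) (p) : lead q ≠ trail p := by
  obtain ⟨⟨i', j', l'⟩, hji', hl'⟩ := p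
  rcases q with i | ⟨⟨i, j, l⟩, hji, hl⟩ <;> intro h
  · exact absurd (congrArg Sigma.snd h).symm (by simp [lead, trail])
  · obtain rfl : i = j' := congrArg Sigma.fst h
    have hperm : (j :: l).Perm (i' :: l') :=
      Multiset.coe_eq_coe.1 (Multiset.toFinsupp.injective (congrArg Sigma.snd h))
    have hj' : i ≤ j := by
      rcases List.mem_cons.1 (hperm.subset List.mem_cons_self) with rfl | hj
      · exact hji'.le
      · exact List.rel_of_pairwise_cons hl' hj
    exact (hji.trans_le hj').false

end NormIdx

abbrev MetabelianModel (k Λ : Type*) [CommRing k] := (Λ →₀ k) × (Λ →₀ MvPolynomial Λ k)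

namespace MetabelianModel

open LieAlgebra MvPolynomial

variable {k Λ : Type*} [CommRing k]

noncomputable def linearPoly : (Λ →₀ k) →ₗ[k] MvPolynomial Λ k :=
  Finsupp.linearCombination k X

noncomputable instance : Bracket (MetabelianModel k Λ) (MetabelianModel k Λ) where
  bracket x y := (0, linearPoly y.1 • x.2 - linearPoly x.1 • y.2)

theorem lie_def (x y : MetabelianModel k Λ) :
    ⁅x, y⁆ = (0, linearPoly y.1 • x.2 - linearPoly x.1 • y.2) :=
  rfl

noncomputable instance : LieRing (MetabelianModel k Λ) where
  add_lie x y z := by ext1 <;> simp [lie_def, add_smul, smul_add]; abel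
  lie_add x y z := by ext1 <;> simp [lie_def, add_smul, smul_add]; abel
  lie_self x := by simp [lie_def]
  leibniz_lie x y z := by ext1 <;> simp [lie_def, smul_sub, smul_smul, mul_comm]

noncomputable instance : LieAlgebra k (MetabelianModel k Λ) where
  lie_smul c x y := by ext1 <;> simp [lie_def, smul_sub, smul_comm c]

noncomputable def gen (i : Λ) : MetabelianModel k Λ := (Finsupp.single i 1, Finsupp.single i 1)

theorem lie_gen_gen (i j : Λ) :
    ⁅(gen i : MetabelianModel k Λ), gen j⁆ =
      (0, Finsupp.single i (X j) - Finsupp.single j (X i : MvPolynomial Λ k)) := by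
  simp [lie_def, gen, linearPoly, Finsupp.smul_single]

theorem leftNormed_gen (m : Λ →₀ MvPolynomial Λ k) (l : List Λ) :
    leftNormed gen ((0, m) : MetabelianModel k Λ) l =
      (0, (l.map (X : Λ → MvPolynomial Λ k)).prod • m) := by
  induction l generalizing m with
  | nil => simp
  | cons c l ih => simp [lie_def, gen, linearPoly, ih, smul_smul, mul_comm]

noncomputable def kerFst : LieIdeal k (MetabelianModel k Λ) where
  toSubmodule := LinearMap.ker (LinearMap.fst k _ _)
  lie_mem _ := rfl

theorem derivedSeries_two_eq_bot : derivedSeries k (MetabelianModel k Λ) 2 = ⊥ :=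
  derivedSeries_two_eq_bot_of_abelian_ideal kerFst (fun _ _ ↦ rfl)
    fun x (hx : x.1 = 0) y (hy : y.1 = 0) ↦ by simp [lie_def, hx, hy]

noncomputable def ofFreeMetabelian : FreeMetabelianLie k Λ →ₗ⁅k⁆ MetabelianModel k Λ :=
  FreeMetabelianLie.lift derivedSeries_two_eq_bot gen

@[simp]
theorem ofFreeMetabelian_fmGen (i : Λ) : ofFreeMetabelian (fmGen k i) = gen i :=
  FreeMetabelianLie.lift_fmGen ..

noncomputable def monomialBasis :
    Module.Basis (Σ _ : Λ, Λ →₀ ℕ) k (Λ →₀ MvPolynomial Λ k) :=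
  Finsupp.basis fun _ ↦ basisMonomials Λ k

theorem monomialBasis_apply (x : Σ _ : Λ, Λ →₀ ℕ) :
    monomialBasis (k := k) x = Finsupp.single x.1 (monomial x.2 1) := by
  simp [monomialBasis]

variable [LinearOrder Λ]

theorem snd_ofFreeMetabelian_normMono_inl (i : Λ) :
    (ofFreeMetabelian (normMono k Λ (.inl i))).2 = monomialBasis (NormIdx.lead (.inl i)) := by
  simp [normMono, gen, monomialBasis_apply, NormIdx.lead]

theorem snd_ofFreeMetabelian_normMono_inr (p) :
    (ofFreeMetabelian (normMono k Λ (.inr p))).2 =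
      monomialBasis (NormIdx.lead (.inr p)) - monomialBasis (NormIdx.trail p) := by
  obtain ⟨⟨i, j, l⟩, _⟩ := p
  have h_gen : ⇑(ofFreeMetabelian (k := k) (Λ := Λ)) ∘ fmGen k = gen :=
    funext ofFreeMetabelian_fmGen
  change (ofFreeMetabelian (leftNormed (fmGen k) ⁅fmGen k i, fmGen k j⁆ l)).2 = _
  rw [LieHom.map_leftNormed, LieHom.map_lie, h_gen, ofFreeMetabelian_fmGen,
    ofFreeMetabelian_fmGen, lie_gen_gen, leftNormed_gen]
  simp [monomialBasis_apply, NormIdx.lead, NormIdx.trail, ← prod_map_X_eq_monomial,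
    Finsupp.smul_single, smul_sub, mul_comm]

theorem linearIndependent_normMono : LinearIndependent k (normMono k Λ) := by
  refine .of_comp ((LinearMap.snd k _ _).comp ofFreeMetabelian.toLinearMap) ?_
  refine .of_dual_family (fun q ↦ monomialBasis.coord (NormIdx.lead q)) ?_ ?_
  · intro q
    change monomialBasis.coord q.lead (ofFreeMetabelian (normMono k Λ q)).2 = 1
    rcases q with i | p
    · simp [snd_ofFreeMetabelian_normMono_inl]
    · simp [snd_ofFreeMetabelian_normMono_inr, (NormIdx.lead_ne_trail (.inr p) p).symm]
  · intro q q' hne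
    change monomialBasis.coord q.lead (ofFreeMetabelian (normMono k Λ q')).2 = 0
    rcases q' with i | p
    · simp [snd_ofFreeMetabelian_normMono_inl, NormIdx.lead_injective.ne hne.symm]
    · simp [snd_ofFreeMetabelian_normMono_inr, NormIdx.lead_injective.ne hne.symm,
        NormIdx.lead_ne_trail]

end MetabelianModel

/-- The normalised monomials form a linear basis of the free metabelian Lie algebra over
a field `k`: they are linearly independent and span. -/
theorem normMono_is_basis (k Λ : Type*) [Field k] [LinearOrder Λ] :
    LinearIndependent k (normMono k Λ) ∧
    Submodule.span k (Set.range (normMono k Λ)) = ⊤ :=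
  ⟨MetabelianModel.linearIndependent_normMono, FreeMetabelianLie.span_normMono_eq_top k⟩
end

section
/- Let k be a field, R = MvPolynomial σ k, and let T be an R-module with no zero smul divisors (torsion-free). Equip M = R × T with the matrix metabelian Lie bracket ⁅(f,u),(g,v)⁆ = (0, g•u − f•v). Let A be a Lie subalgebra of M that is not abelian. Then the Fitting radical of A (as a Lie algebra in its own right) consists exactly of the elements of A with zero first component: Fit(A) = { (f, u) ∈ A | f = 0 }. -/
section MatLie

variable (R T : Type*) [CommRing R] [AddCommGroup T] [Module R T]

/-- The matrix metabelian Lie ring structure on `R × T`: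
`⁅(f,u),(g,v)⁆ = (0, g•u − f•v)`. -/
instance matLieRing : LieRing (R × T) where
  bracket x y := (0, y.1 • x.2 - x.1 • y.2)
  add_lie x y z := by
    show (0, z.1 • (x.2 + y.2) - (x.1 + y.1) • z.2) =
      (0, z.1 • x.2 - x.1 • z.2) + (0, z.1 • y.2 - y.1 • z.2)
    ext
    · simp
    · simp only [smul_add, add_smul, Prod.snd_add]
      abel
  lie_add x y z := by
    show (0, (y.1 + z.1) • x.2 - x.1 • (y.2 + z.2)) =
      (0, y.1 • x.2 - x.1 • y.2) + (0, z.1 • x.2 - x.1 • z.2)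
    ext
    · simp
    · simp only [smul_add, add_smul, Prod.snd_add]
      abel
  lie_self x := by
    show (0, x.1 • x.2 - x.1 • x.2) = 0
    ext <;> simp
  leibniz_lie x y z := by
    show ((0:R), (0:R) • x.2 - x.1 • (z.1 • y.2 - y.1 • z.2)) =
      ((0:R), z.1 • (y.1 • x.2 - x.1 • y.2) - (0:R) • z.2) +
      ((0:R), (0:R) • y.2 - y.1 • (z.1 • x.2 - x.1 • z.2))
    ext
    · simp
    · simp only [smul_sub, smul_smul, mul_comm, zero_smul, Prod.snd_add]
      abel

variable (k : Type*) [CommRing k] [Algebra k R] [Module k T]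
  [IsScalarTower k R T] [SMulCommClass k R T]

/-- The matrix metabelian Lie algebra structure over `k` on `R × T`. -/
instance matLieAlgebra : LieAlgebra k (R × T) where
  lie_smul t x y := by
    show ((0:R), (t • y).1 • x.2 - x.1 • (t • y).2) = t • ((0:R), y.1 • x.2 - x.1 • y.2)
    ext
    · simp
    · show (t • y.1) • x.2 - x.1 • t • y.2 = t • (y.1 • x.2 - x.1 • y.2)
      rw [smul_sub, smul_assoc, smul_comm x.1 t y.2]

end MatLie

/-! Elements of `A` with zero first component have zero brackets with each other, so they form an
abelian, hence nilpotent, ideal. Conversely, `ad a` acts on such elements by multiplying the second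
component by `-a.1`. As `A` is not abelian it contains a bracket `w = (0, v)` with `v ≠ 0`; if `a`
lies in a nilpotent ideal, then `(ad a)^(n+1) w = (0, (-a.1)^(n+1) • v)` vanishes for some `n`, which
in a torsion-free module forces `a.1 = 0`. -/

theorem eq_zero_or_eq_zero_of_pow_smul_eq_zero {R M : Type*} [MonoidWithZero R] [Zero M]
    [MulAction R M] [NoZeroSMulDivisors R M] {r : R} {v : M} :
    ∀ {n : ℕ}, r ^ n • v = 0 → r = 0 ∨ v = 0
  | 0, h => Or.inr (by rwa [pow_zero, one_smul] at h)
  | n + 1, h => by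
    rw [pow_succ', mul_smul] at h
    exact (eq_zero_or_eq_zero_of_smul_eq_zero h).elim Or.inl
      eq_zero_or_eq_zero_of_pow_smul_eq_zero

namespace MatLie

variable {R T : Type*} [CommRing R] [AddCommGroup T] [Module R T]

theorem lie_def (x y : R × T) : ⁅x, y⁆ = (0, y.1 • x.2 - x.1 • y.2) := rfl

theorem iterate_lie_of_fst_eq_zero (a : R × T) {y : R × T} (hy : y.1 = 0) (n : ℕ) :
    (⁅a, ·⁆)^[n] y = (0, (-a.1) ^ n • y.2) := by
  induction n with
  | zero => simp [← hy]
  | succ n ih =>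
    rw [Function.iterate_succ_apply', ih, lie_def, zero_smul, zero_sub, pow_succ', mul_smul,
      neg_smul]

variable {k : Type*} [CommRing k] [Algebra k R] [Module k T]
  [IsScalarTower k R T] (A : LieSubalgebra k (R × T))

def kerFst : LieIdeal k A where
  carrier := {x | (x : R × T).1 = 0}
  add_mem' {x y} hx hy := by simp_all
  zero_mem' := rfl
  smul_mem' c x hx := by simp_all
  lie_mem _ := rfl

theorem mem_kerFst {x : A} : x ∈ kerFst A ↔ (x : R × T).1 = 0 := Iff.rfl

instance : IsLieAbelian (kerFst A) where
  trivial x y := by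
    ext1; ext1
    change ⁅((x : A) : R × T), ((y : A) : R × T)⁆ = 0
    rw [lie_def, (mem_kerFst A).mp x.2, (mem_kerFst A).mp y.2, zero_smul, zero_smul, sub_zero,
      Prod.mk_zero_zero]

theorem exists_fst_eq_zero_snd_ne_zero (h : ¬ IsLieAbelian A) :
    ∃ w : A, (w : R × T).1 = 0 ∧ (w : R × T).2 ≠ 0 := by
  obtain ⟨x, y, hxy⟩ : ∃ x y : A, ⁅x, y⁆ ≠ 0 := by
    by_contra! h'
    exact h ⟨h'⟩
  refine ⟨⁅x, y⁆, rfl, fun h2 => hxy ?_⟩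
  exact Subtype.ext (Prod.ext rfl h2)

theorem le_kerFst_of_isNilpotent [NoZeroSMulDivisors R T] (h : ¬ IsLieAbelian A)
    (J : LieIdeal k A) [LieRing.IsNilpotent J] : J ≤ kerFst A := by
  intro a ha
  obtain ⟨w, hw1, hw2⟩ := exists_fst_eq_zero_snd_ne_zero A h
  obtain ⟨n, hn⟩ := LieModule.isNilpotent_toEnd_of_isNilpotent k J J ⟨a, ha⟩
  let b : J := ⟨⁅a, w⁆, lie_mem_left k A J a w ha⟩
  have hcoe : Function.Semiconj (fun z : J => ((z : A) : R × T))
      (LieModule.toEnd k J J ⟨a, ha⟩) (fun z : R × T => ⁅(a : R × T), z⁆) := fun _ => rfl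
  have hb : (LieModule.toEnd k J J ⟨a, ha⟩)^[n] b = 0 := by
    rw [← Module.End.pow_apply, hn, LinearMap.zero_apply]
  have hzero : (fun z : R × T => ⁅(a : R × T), z⁆)^[n + 1] w = 0 := by
    rw [Function.iterate_succ_apply]
    exact (hcoe.iterate_right n b).symm.trans (congrArg (fun z : J => ((z : A) : R × T)) hb)
  rw [iterate_lie_of_fst_eq_zero _ hw1] at hzero
  rcases eq_zero_or_eq_zero_of_pow_smul_eq_zero (congrArg Prod.snd hzero) with hf | hv
  · exact neg_eq_zero.mp hf
  · exact absurd hv hw2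

theorem fittingRadical_eq_kerFst [NoZeroSMulDivisors R T] (h : ¬ IsLieAbelian A) :
    fittingRadical k A = kerFst A :=
  le_antisymm (sSup_le fun J (_ : LieRing.IsNilpotent J) => le_kerFst_of_isNilpotent A h J)
    (le_sSup (inferInstance : LieRing.IsNilpotent (kerFst A)))

end MatLie

theorem fittingRadical_matLie_general {k σ T : Type*} [Field k] [AddCommGroup T]
    [Module (MvPolynomial σ k) T] [NoZeroSMulDivisors (MvPolynomial σ k) T]
    [Module k T] [IsScalarTower k (MvPolynomial σ k) T]
    (A : LieSubalgebra k (MvPolynomial σ k × T))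
    (hnab : ¬ ∀ x y : A, ⁅x, y⁆ = 0) :
    ∀ x : A, x ∈ fittingRadical k ↥A ↔ (x : MvPolynomial σ k × T).1 = 0 :=
  SetLike.ext_iff.mp (MatLie.fittingRadical_eq_kerFst A fun h => hnab h.trivial)

/-- The Fitting radical of a non-abelian Lie subalgebra of a matrix metabelian Lie
algebra `R × T` (with `R = MvPolynomial σ k` and `T` torsion-free) consists exactly of
the elements with zero first component. -/
theorem fittingRadical_matLie {k σ T : Type*} [Field k] [AddCommGroup T]
    [Module (MvPolynomial σ k) T] [NoZeroSMulDivisors (MvPolynomial σ k) T]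
    [Module k T] [IsScalarTower k (MvPolynomial σ k) T]
    [SMulCommClass k (MvPolynomial σ k) T]
    (A : LieSubalgebra k (MvPolynomial σ k × T))
    (hnab : ¬ ∀ x y : A, ⁅x, y⁆ = 0) :
    ∀ x : A, x ∈ fittingRadical k ↥A ↔ (x : MvPolynomial σ k × T).1 = 0 :=
  fittingRadical_matLie_general A hnab
end

section
/- Let k be a field, R = MvPolynomial σ k, and let T be an R-module with no zero smul divisors (torsion-free). Equip M = R × T with the matrix metabelian Lie bracket ⁅(f,u),(g,v)⁆ = (0, g•u − f•v). Then for all x, y, z ∈ M: if ⁅x, y⁆ = 0, ⁅x, z⁆ = 0 and x ≠ 0, then ⁅y, z⁆ = 0. -/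
/-! The bracket of `x = (f, u)` with `y = (g, v)` vanishes iff `g • u = f • v`. If `f ≠ 0`, the
relations for `y` and `z` give `f • ⁅y, z⁆ = 0`, so `⁅y, z⁆ = 0` by torsion-freeness. If `f = 0`
then `u ≠ 0`, and the relations force the first components of `y` and `z` to vanish, in which
case their bracket is zero. -/

namespace MatLie

variable {R T : Type*} [CommRing R] [AddCommGroup T] [Module R T]

@[simp]
theorem lie_fst (x y : R × T) : ⁅x, y⁆.1 = 0 := rfl

theorem lie_snd (x y : R × T) : ⁅x, y⁆.2 = y.1 • x.2 - x.1 • y.2 := rfl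

theorem lie_eq_zero_iff {x y : R × T} : ⁅x, y⁆ = 0 ↔ y.1 • x.2 = x.1 • y.2 := by
  simp [Prod.ext_iff, lie_snd, sub_eq_zero]

theorem lie_eq_zero_of_fst_eq_zero {y z : R × T} (hy : y.1 = 0) (hz : z.1 = 0) :
    ⁅y, z⁆ = 0 := by
  simp [lie_eq_zero_iff, hy, hz]

theorem fst_smul_lie_snd_eq_zero {x y z : R × T} (h1 : ⁅x, y⁆ = 0) (h2 : ⁅x, z⁆ = 0) :
    x.1 • ⁅y, z⁆.2 = 0 := by
  rw [lie_eq_zero_iff] at h1 h2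
  rw [lie_snd, smul_sub, smul_comm x.1 z.1, smul_comm x.1 y.1, ← h1, ← h2, smul_comm, sub_self]

variable [NoZeroSMulDivisors R T]

theorem lie_eq_zero_of_fst_ne_zero {x y z : R × T} (hx : x.1 ≠ 0) (h1 : ⁅x, y⁆ = 0)
    (h2 : ⁅x, z⁆ = 0) : ⁅y, z⁆ = 0 :=
  Prod.ext (lie_fst y z)
    ((eq_zero_or_eq_zero_of_smul_eq_zero (fst_smul_lie_snd_eq_zero h1 h2)).resolve_left hx)

theorem fst_eq_zero_of_lie_eq_zero {x y : R × T} (hx1 : x.1 = 0) (hx2 : x.2 ≠ 0)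
    (h : ⁅x, y⁆ = 0) : y.1 = 0 := by
  rw [lie_eq_zero_iff, hx1, zero_smul] at h
  exact (eq_zero_or_eq_zero_of_smul_eq_zero h).resolve_right hx2

end MatLie

open MatLie in
/-- In a matrix metabelian Lie algebra `R × T` with `R = MvPolynomial σ k` and `T`
torsion-free: if `⁅x,y⁆ = 0`, `⁅x,z⁆ = 0` and `x ≠ 0` then `⁅y,z⁆ = 0`. -/
theorem matLie_bracket_trans {k σ T : Type*} [Field k] [AddCommGroup T]
    [Module (MvPolynomial σ k) T] [NoZeroSMulDivisors (MvPolynomial σ k) T]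
    (x y z : MvPolynomial σ k × T)
    (h1 : ⁅x, y⁆ = 0) (h2 : ⁅x, z⁆ = 0) (hx : x ≠ 0) :
    ⁅y, z⁆ = 0 := by
  by_cases hx1 : x.1 = 0
  · have hx2 : x.2 ≠ 0 := fun hx2 => hx (Prod.ext hx1 hx2)
    exact lie_eq_zero_of_fst_eq_zero (fst_eq_zero_of_lie_eq_zero hx1 hx2 h1)
      (fst_eq_zero_of_lie_eq_zero hx1 hx2 h2)
  · exact lie_eq_zero_of_fst_ne_zero hx1 h1 h2
end

section
/- Let k be a field, let σ be a nonempty type, and let R = MvPolynomial σ k. Let s : ℕ and let v₁, …, vₘ be finitely many nonzero elements of the free R-module Fin s → R. Let T₁ be a nontrivial torsion-free R-module generated by a single element. Then there exists an R-linear map φ : (Fin s → R) →ₗ[R] T₁ such that φ(vⱼ) ≠ 0 for every j = 1, …, m. (The free module of rank s is discriminated by a one-generated torsion-free R-module.) -/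
/-!
Sending `x ∈ Rˢ` to the value at `c` of the polynomial with coefficient vector `x` is
`R`-linear. Over an infinite domain some `c` avoids the finitely many roots of the nonzero
polynomials with coefficient vectors `vⱼ`; multiplying by a nonzero element of a
torsion-free module then keeps every value nonzero.
-/

open Polynomial

theorem Polynomial.exists_forall_eval_ne_zero {R ι : Type*} [CommRing R] [IsDomain R]
    [Infinite R] [Fintype ι] (p : ι → R[X]) (hp : ∀ j, p j ≠ 0) :
    ∃ c, ∀ j, (p j).eval c ≠ 0 := by
  obtain ⟨c, hc⟩ : ∃ c, (∏ j, p j).eval c ≠ 0 := by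
    by_contra! h
    exact Finset.prod_ne_zero_iff.mpr (fun j _ => hp j) (zero_of_eval_zero _ h)
  rw [eval_prod, Finset.prod_ne_zero_iff] at hc
  exact ⟨c, fun j => hc j (Finset.mem_univ j)⟩

theorem exists_linearMap_pi_forall_ne_zero {R ι : Type*} [CommRing R] [IsDomain R]
    [Infinite R] [Fintype ι] {s : ℕ} (v : ι → Fin s → R) (hv : ∀ j, v j ≠ 0) :
    ∃ φ : (Fin s → R) →ₗ[R] R, ∀ j, φ (v j) ≠ 0 := by
  classical
  obtain ⟨c, hc⟩ := exists_forall_eval_ne_zero (fun j => ofFn s (v j))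
    fun j => (map_ne_zero_iff _ (injective_ofFn s)).mpr (hv j)
  exact ⟨(leval c).comp (ofFn s), hc⟩

theorem exists_linearMap_pi_forall_ne_zero_of_noZeroSMulDivisors {R ι : Type*} [CommRing R]
    [IsDomain R] [Infinite R] [Fintype ι] {s : ℕ} (v : ι → Fin s → R) (hv : ∀ j, v j ≠ 0)
    (M : Type*) [AddCommGroup M] [Module R M] [Nontrivial M] [NoZeroSMulDivisors R M] :
    ∃ φ : (Fin s → R) →ₗ[R] M, ∀ j, φ (v j) ≠ 0 := by
  obtain ⟨φ, hφ⟩ := exists_linearMap_pi_forall_ne_zero v hv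
  obtain ⟨t, ht⟩ := exists_ne (0 : M)
  exact ⟨(LinearMap.toSpanSingleton R M t).comp φ, fun j => smul_ne_zero (hφ j) ht⟩

theorem free_module_discriminated_by_cyclic_general {k σ : Type*} [Field k] [Nonempty σ]
    (s m : ℕ) (v : Fin m → (Fin s → MvPolynomial σ k)) (hv : ∀ j, v j ≠ 0)
    (T₁ : Type*) [AddCommGroup T₁] [Module (MvPolynomial σ k) T₁] [Nontrivial T₁]
    [NoZeroSMulDivisors (MvPolynomial σ k) T₁] :
    ∃ φ : (Fin s → MvPolynomial σ k) →ₗ[MvPolynomial σ k] T₁, ∀ j, φ (v j) ≠ 0 :=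
  exists_linearMap_pi_forall_ne_zero_of_noZeroSMulDivisors v hv T₁

/-- The free module of rank `s` over `R = MvPolynomial σ k` (`σ` nonempty) is
discriminated by any nontrivial cyclic torsion-free `R`-module `T₁`: for finitely many
nonzero vectors `vⱼ` there is an `R`-linear map `φ` to `T₁` with `φ(vⱼ) ≠ 0` for all `j`. -/
theorem free_module_discriminated_by_cyclic {k σ : Type*} [Field k] [Nonempty σ]
    (s m : ℕ) (v : Fin m → (Fin s → MvPolynomial σ k)) (hv : ∀ j, v j ≠ 0)
    (T₁ : Type*) [AddCommGroup T₁] [Module (MvPolynomial σ k) T₁] [Nontrivial T₁]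
    [NoZeroSMulDivisors (MvPolynomial σ k) T₁]
    (hcyc : ∃ t : T₁, Submodule.span (MvPolynomial σ k) {t} = ⊤) :
    ∃ φ : (Fin s → MvPolynomial σ k) →ₗ[MvPolynomial σ k] T₁, ∀ j, φ (v j) ≠ 0 :=
  free_module_discriminated_by_cyclic_general s m v hv T₁
end

section
/- Let k be a field and let A be a finitely generated metabelian Lie algebra over k whose Fitting radical Fit(A) is abelian. Suppose a₁, …, a_r ∈ A are elements whose images form a basis of the quotient k-vector space A / Fit(A), and let R = MvPolynomial (Fin r) k act on Fit(A) by evaluating polynomials at the pairwise commuting k-linear endomorphisms b ↦ ⁅b, aᵢ⁆ of Fit(A) (this R-module structure is well defined because A is metabelian and Fit(A) is an abelian ideal containing ⁅A, A⁆). Assume this R-module Fit(A) is torsion-free: f • b ≠ 0 whenever f ∈ R and b ∈ Fit(A) are both nonzero. Then there exist s : ℕ and an injective Lie algebra homomorphism γ : A → R × (Fin s → R), where R × (Fin s → R) carries the matrix metabelian Lie bracket ⁅(f,u),(g,v)⁆ = (0, g•u − f•v), such that for every a ∈ A the first component of γ(a) is a k-linear combination of the variables X₁, …, X_r (a homogeneous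 polynomial of degree one with zero constant term). -/
/-!
Since `A` is metabelian, `⁅A, A⁆` is an abelian, hence nilpotent, ideal, so it lies in `F = Fit(A)`.
Write `x = ∑ cᵢ(x) aᵢ + p(x)` with `p(x) ∈ F` and `λ(x) = ∑ cᵢ(x) Xᵢ`. Then `⁅b, x⁆ = λ(x) • b` for
`b ∈ F`, and
  `⁅x, y⁆ = ∑ cᵢ(x) cⱼ(y) ⁅aᵢ, aⱼ⁆ + λ(y) • p(x) - λ(x) • p(y)`.
Hence `F` is generated as an `R`-module by the `⁅aᵢ, aⱼ⁆` and the `p(s)` for generators `s` of `A`,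
and being torsion-free it embeds into some `Rˢ` by a map `e` (multiplication by a common denominator
lands in the span of a maximal independent family of generators). Fix an index `l`; by the Jacobi
identity `X_l • ⁅aᵢ, aⱼ⁆ = Xⱼ • ⁅aᵢ, a_l⁆ - Xᵢ • ⁅aⱼ, a_l⁆`, so the map
`x ↦ (λ(x), X_l • e(p(x)) + ∑ cᵢ(x) • e⁅aᵢ, a_l⁆)` obeys the bracket of `R × Rˢ`, and it is
injective because `Rˢ` is torsion-free. For `r = 0` one uses `x ↦ (0, e(x))` instead.
-/

theorem lie_add_add_eq_of_lie_eq_zero {L : Type*} [LieRing L] {x y p q : L} (h : ⁅p, q⁆ = 0) :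
    ⁅x + p, y + q⁆ = ⁅x, y⁆ + ⁅p, y + q⁆ - ⁅q, x + p⁆ := by
  have h' : ⁅q, p⁆ = 0 := by rw [← lie_skew, h, neg_zero]
  simp only [add_lie, lie_add, h, h', ← lie_skew x q]
  abel

theorem lie_eq_zero_of_mem_span {k A : Type*} [CommRing k] [LieRing A] [LieAlgebra k A]
    {s : Set A} (hs : ∀ x ∈ s, ∀ y ∈ s, ⁅x, y⁆ = 0) {x y : A}
    (hx : x ∈ Submodule.span k s) (hy : y ∈ Submodule.span k s) : ⁅x, y⁆ = 0 := by
  induction hx, hy using Submodule.span_induction₂ with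
  | mem_mem x y hx hy => exact hs x hx y hy
  | zero_left | zero_right => simp
  | add_left x y z _ _ _ h₁ h₂ => rw [add_lie, h₁, h₂, add_zero]
  | add_right x y z _ _ _ h₁ h₂ => rw [lie_add, h₁, h₂, add_zero]
  | smul_left c x y _ _ h => rw [smul_lie, h, smul_zero]
  | smul_right c x y _ _ h => rw [lie_smul, h, smul_zero]

theorem IsMetabelian.lie_mem_fittingRadical {k A : Type*} [CommRing k] [LieRing A]
    [LieAlgebra k A] (hA : IsMetabelian A) (x y : A) : ⁅x, y⁆ ∈ fittingRadical k A := by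
  let D : LieIdeal k A := ⁅(⊤ : LieIdeal k A), ⊤⁆
  have hD (u : D) : (u : A) ∈
      Submodule.span k {m | ∃ x ∈ (⊤ : LieIdeal k A), ∃ n ∈ (⊤ : LieIdeal k A), ⁅x, n⁆ = m} := by
    rw [← LieSubmodule.lieIdeal_oper_eq_linear_span']
    exact u.2
  have : IsLieAbelian D := ⟨fun u v => Subtype.ext (lie_eq_zero_of_mem_span (by
    rintro _ ⟨a, -, b, -, rfl⟩ _ ⟨c, -, d, -, rfl⟩
    exact hA a b c d) (hD u) (hD v))⟩
  have hle : D ≤ fittingRadical k A := le_sSup (inferInstanceAs (LieRing.IsNilpotent D))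
  exact hle (LieSubmodule.lie_mem_lie (LieSubmodule.mem_top x) (LieSubmodule.mem_top y))

open Submodule Set in
theorem Module.exists_injective_fin_pi_of_isTorsionFree (R M : Type*) [CommRing R] [IsDomain R]
    [AddCommGroup M] [Module R M] [Module.Finite R M] [Module.IsTorsionFree R M] :
    ∃ (s : ℕ) (f : M →ₗ[R] Fin s → R), Function.Injective f := by
  obtain ⟨n, v, hv⟩ := Module.Finite.exists_fin (R := R) (M := M)
  obtain ⟨J, hJ, hmax⟩ := exists_maximal_linearIndepOn R v
  set N := span R (range fun j : J => v j)
  have hc : ∀ i, ∃ c : R, c ≠ 0 ∧ c • v i ∈ N := by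
    intro i
    by_cases hi : i ∈ J
    · exact ⟨1, one_ne_zero, by simpa using subset_span (mem_range_self (⟨i, hi⟩ : J))⟩
    · simpa [N, image_eq_range] using hmax i hi
  choose c hc0 hc using hc
  have hd : ∀ x : M, (∏ i, c i) • x ∈ N := by
    suffices ⊤ ≤ N.comap (LinearMap.lsmul R M (∏ i, c i)) from fun x => this mem_top
    rw [← hv, span_le]
    rintro _ ⟨i, rfl⟩
    simpa [Fintype.prod_eq_prod_compl_mul i, mul_smul] using N.smul_mem _ (hc i)
  refine ⟨Nat.card J, (LinearEquiv.funCongrLeft R R (Finite.equivFin J).symm).toLinearMap ∘ₗ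
    (Module.Basis.span hJ).equivFun.toLinearMap ∘ₗ
    (LinearMap.lsmul R M (∏ i, c i)).codRestrict N hd, ?_⟩
  simp only [LinearMap.coe_comp, LinearEquiv.coe_coe, EquivLike.comp_injective]
  exact fun x y h => smul_right_injective M (Finset.prod_ne_zero_iff.mpr fun i _ => hc0 i)
    (congrArg Subtype.val h)

theorem sum_smul_sum_sub_sum_smul_sum {k R T ι : Type*} [CommRing k] [CommRing R] [Algebra k R]
    [AddCommGroup T] [Module R T] [Module k T] [IsScalarTower k R T] [Fintype ι]
    (v : ι → R) (w : ι → T) (c c' : ι → k) :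
    (∑ j, c' j • v j) • (∑ i, c i • w i) - (∑ i, c i • v i) • (∑ j, c' j • w j) =
      ∑ i, ∑ j, (c i * c' j) • (v j • w i - v i • w j) := by
  simp only [Finset.sum_smul, Finset.smul_sum, smul_sub, Finset.sum_sub_distrib, smul_assoc,
    mul_smul, smul_comm (v _) (c _), smul_comm (c' _) (c _)]
  rw [Finset.sum_comm (γ := ι)]
  congr 1
  rw [Finset.sum_comm (γ := ι)]
  simp only [smul_comm (v _) (c' _)]

section MatLieHom

variable {k R T A : Type*} [CommRing k] [CommRing R] [Algebra k R] [AddCommGroup T] [Module R T]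
  [Module k T] [IsScalarTower k R T] [LieRing A] [LieAlgebra k A]

def matLieHom (l : A →ₗ[k] R) (m : A →ₗ[k] T) (hl : ∀ x y : A, l ⁅x, y⁆ = 0)
    (hm : ∀ x y : A, m ⁅x, y⁆ = l y • m x - l x • m y) : A →ₗ⁅k⁆ R × T :=
  { l.prod m with map_lie' := fun {x y} => Prod.ext (hl x y) (hm x y) }

theorem matLieHom_injective {l : A →ₗ[k] R} {m : A →ₗ[k] T} (hl : ∀ x y : A, l ⁅x, y⁆ = 0)
    (hm : ∀ x y : A, m ⁅x, y⁆ = l y • m x - l x • m y) (h : ∀ x, l x = 0 → m x = 0 → x = 0) :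
    Function.Injective (matLieHom l m hl hm) :=
  (injective_iff_map_eq_zero _).mpr fun x hx =>
    h x (congrArg Prod.fst hx) (congrArg Prod.snd hx)

end MatLieHom

open MvPolynomial

section LiftBracket

variable {k A ι : Type*} [CommRing k] [LieRing A] [LieAlgebra k A] {I : LieIdeal k A} (a : ι → A)

def liftBracket (hI : ∀ x y : A, ⁅x, y⁆ ∈ I) (i j : ι) : I := ⟨⁅a i, a j⁆, hI _ _⟩

variable {a}

theorem X_smul_liftBracket [Module (MvPolynomial ι k) I] (hI : ∀ x y : A, ⁅x, y⁆ ∈ I)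
    (hX : ∀ (i : ι) (b : I), (((X i : MvPolynomial ι k) • b : I) : A) = ⁅(b : A), a i⁆)
    (i j l : ι) :
    (X l : MvPolynomial ι k) • liftBracket a hI i j =
      (X j : MvPolynomial ι k) • liftBracket a hI i l -
        (X i : MvPolynomial ι k) • liftBracket a hI j l := by
  ext
  simp only [LieSubmodule.coe_sub, hX, liftBracket]
  rw [lie_lie, ← lie_skew ⁅a i, a l⁆, ← lie_skew ⁅a j, a l⁆]
  abel

theorem exists_smul_liftBracket_eq [Nontrivial k] {T : Type*} [AddCommGroup T]
    [Module (MvPolynomial ι k) T] [Module (MvPolynomial ι k) I] (hI : ∀ x y : A, ⁅x, y⁆ ∈ I)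
    (hX : ∀ (i : ι) (b : I), (((X i : MvPolynomial ι k) • b : I) : A) = ⁅(b : A), a i⁆)
    (e : I →ₗ[MvPolynomial ι k] T) :
    ∃ d : MvPolynomial ι k, d ≠ 0 ∧ ∃ τ : ι → T, ∀ i j,
      d • e (liftBracket a hI i j) =
        (X j : MvPolynomial ι k) • τ i - (X i : MvPolynomial ι k) • τ j := by
  rcases isEmpty_or_nonempty ι with hι | ⟨⟨l⟩⟩
  · exact ⟨1, one_ne_zero, 0, fun i => isEmptyElim i⟩
  · refine ⟨X l, X_ne_zero l, fun i => e (liftBracket a hI i l), fun i j => ?_⟩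
    rw [← map_smul, X_smul_liftBracket hI hX i j l, map_sub, map_smul, map_smul]

end LiftBracket

noncomputable section Splitting

variable {k A ι : Type*} [CommRing k] [LieRing A] [LieAlgebra k A] [Fintype ι] {I : LieIdeal k A}
  (bas : Module.Basis ι k (A ⧸ I)) (a : ι → A)

def quotCoord : A →ₗ[k] ι → k :=
  bas.equivFun.toLinearMap ∘ₗ (LieSubmodule.Quotient.mk' I : A →ₗ[k] A ⧸ I)

def linearPoly : A →ₗ[k] MvPolynomial ι k :=
  Fintype.linearCombination k X ∘ₗ quotCoord bas

theorem linearPoly_apply (x : A) : linearPoly bas x = ∑ i, quotCoord bas x i • X i :=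
  rfl

theorem linearPoly_mem_span_X (x : A) :
    linearPoly bas x ∈ Submodule.span k (Set.range (X : ι → MvPolynomial ι k)) := by
  rw [← Fintype.range_linearCombination]
  exact LinearMap.mem_range_self _ _

theorem quotCoord_eq_zero_iff {x : A} : quotCoord bas x = 0 ↔ x ∈ I := by
  simp [quotCoord]

theorem linearPoly_eq_zero_of_mem {x : A} (hx : x ∈ I) : linearPoly bas x = 0 := by
  rw [linearPoly_apply, (quotCoord_eq_zero_iff bas).mpr hx]
  simp

theorem quotCoord_eq_zero_of_linearPoly_eq_zero {x : A} (hx : linearPoly bas x = 0) :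
    quotCoord bas x = 0 :=
  funext (Fintype.linearIndependent_iff.mp (linearIndependent_X ι k) _ hx)

theorem sub_sum_quotCoord_smul_mem (hbas : ∀ i, bas i = LieSubmodule.Quotient.mk' I (a i))
    (x : A) : x - ∑ i, quotCoord bas x i • a i ∈ I := by
  rw [← LieSubmodule.Quotient.mk_eq_zero]
  simp only [map_sub, map_sum, map_smul, ← hbas]
  simp [quotCoord]

variable {bas a}

def idealComponent (hbas : ∀ i, bas i = LieSubmodule.Quotient.mk' I (a i)) : A →ₗ[k] I :=
  (LinearMap.id - Fintype.linearCombination k a ∘ₗ quotCoord bas).codRestrict I.toSubmodule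
    (sub_sum_quotCoord_smul_mem bas a hbas)

theorem coe_idealComponent (hbas : ∀ i, bas i = LieSubmodule.Quotient.mk' I (a i)) (x : A) :
    (idealComponent hbas x : A) = x - ∑ i, quotCoord bas x i • a i :=
  rfl

theorem sum_quotCoord_smul_add_idealComponent
    (hbas : ∀ i, bas i = LieSubmodule.Quotient.mk' I (a i)) (x : A) :
    ∑ i, quotCoord bas x i • a i + idealComponent hbas x = x :=
  add_sub_cancel _ _

theorem idealComponent_of_mem (hbas : ∀ i, bas i = LieSubmodule.Quotient.mk' I (a i)) {x : A}
    (hx : x ∈ I) : idealComponent hbas x = ⟨x, hx⟩ := by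
  ext
  simp [coe_idealComponent, (quotCoord_eq_zero_iff bas).mpr hx]

variable [Module (MvPolynomial ι k) I] [IsScalarTower k (MvPolynomial ι k) I]

theorem lie_eq_linearPoly_smul (hbas : ∀ i, bas i = LieSubmodule.Quotient.mk' I (a i))
    (habel : ∀ x ∈ I, ∀ y ∈ I, ⁅x, y⁆ = 0)
    (hX : ∀ (i : ι) (b : I), (((X i : MvPolynomial ι k) • b : I) : A) = ⁅(b : A), a i⁆)
    (b : I) (x : A) :
    ⁅(b : A), x⁆ = ((linearPoly bas x • b : I) : A) := by
  conv_lhs => rw [← sum_quotCoord_smul_add_idealComponent hbas x]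
  rw [lie_add, habel _ b.2 _ (idealComponent hbas x).2, add_zero, lie_sum]
  simp only [lie_smul, ← hX, linearPoly, LinearMap.comp_apply, Fintype.linearCombination_apply,
    Finset.sum_smul, smul_assoc, AddSubmonoidClass.coe_finsetSum, LieSubmodule.coe_smul]

theorem idealComponent_lie (hbas : ∀ i, bas i = LieSubmodule.Quotient.mk' I (a i))
    (hI : ∀ x y : A, ⁅x, y⁆ ∈ I) (habel : ∀ x ∈ I, ∀ y ∈ I, ⁅x, y⁆ = 0)
    (hX : ∀ (i : ι) (b : I), (((X i : MvPolynomial ι k) • b : I) : A) = ⁅(b : A), a i⁆)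
    (x y : A) :
    idealComponent hbas ⁅x, y⁆ =
      ∑ i, ∑ j, (quotCoord bas x i * quotCoord bas y j) • liftBracket a hI i j +
        linearPoly bas y • idealComponent hbas x - linearPoly bas x • idealComponent hbas y := by
  have key := lie_add_add_eq_of_lie_eq_zero (x := ∑ i, quotCoord bas x i • a i)
    (y := ∑ j, quotCoord bas y j • a j)
    (habel _ (idealComponent hbas x).2 _ (idealComponent hbas y).2)
  rw [sum_quotCoord_smul_add_idealComponent, sum_quotCoord_smul_add_idealComponent] at key
  rw [idealComponent_of_mem hbas (hI x y)]
  ext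
  simp only [LieSubmodule.coe_add, LieSubmodule.coe_sub, AddSubmonoidClass.coe_finsetSum,
    LieSubmodule.coe_smul, liftBracket, ← lie_eq_linearPoly_smul hbas habel hX]
  rw [key, sum_lie]
  simp only [lie_sum, smul_lie, lie_smul, smul_smul, mul_comm]

theorem span_liftBracket_union_idealComponent_eq_top
    (hbas : ∀ i, bas i = LieSubmodule.Quotient.mk' I (a i))
    (hI : ∀ x y : A, ⁅x, y⁆ ∈ I) (habel : ∀ x ∈ I, ∀ y ∈ I, ⁅x, y⁆ = 0)
    (hX : ∀ (i : ι) (b : I), (((X i : MvPolynomial ι k) • b : I) : A) = ⁅(b : A), a i⁆)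
    {S : Set A} (hS : LieSubalgebra.lieSpan k A S = ⊤) :
    Submodule.span (MvPolynomial ι k)
      (Set.range (Function.uncurry (liftBracket a hI)) ∪ idealComponent hbas '' S) = ⊤ := by
  set N := Submodule.span (MvPolynomial ι k)
    (Set.range (Function.uncurry (liftBracket a hI)) ∪ idealComponent hbas '' S)
  let B : LieSubalgebra k A :=
    { toSubmodule := (N.restrictScalars k).comap (idealComponent hbas)
      lie_mem' := fun {x y} hx hy => by
        change idealComponent hbas ⁅x, y⁆ ∈ N
        rw [idealComponent_lie hbas hI habel hX]
        refine sub_mem (add_mem (Submodule.sum_mem _ fun i _ => Submodule.sum_mem _ fun j _ => ?_)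
          (N.smul_mem _ hx)) (N.smul_mem _ hy)
        exact N.smul_of_tower_mem _ (Submodule.subset_span (Or.inl ⟨(i, j), rfl⟩)) }
  have hB : B = ⊤ := eq_top_iff.mpr <| hS ▸ LieSubalgebra.lieSpan_le.mpr fun s hs =>
    Submodule.subset_span (Or.inr ⟨s, hs, rfl⟩)
  refine eq_top_iff.mpr fun u _ => ?_
  have hu : idealComponent hbas u ∈ N := (hB ▸ LieSubalgebra.mem_top (u : A) : (u : A) ∈ B)
  simpa only [idealComponent_of_mem hbas u.2] using hu

variable {T : Type*} [AddCommGroup T] [Module (MvPolynomial ι k) T] [Module k T]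
  [IsScalarTower k (MvPolynomial ι k) T]

def embedSnd (hbas : ∀ i, bas i = LieSubmodule.Quotient.mk' I (a i))
    (e : I →ₗ[MvPolynomial ι k] T) (d : MvPolynomial ι k) (τ : ι → T) : A →ₗ[k] T :=
  (d • e).restrictScalars k ∘ₗ idealComponent hbas + Fintype.linearCombination k τ ∘ₗ quotCoord bas

theorem embedSnd_apply (hbas : ∀ i, bas i = LieSubmodule.Quotient.mk' I (a i))
    (e : I →ₗ[MvPolynomial ι k] T) (d : MvPolynomial ι k) (τ : ι → T) (x : A) :
    embedSnd hbas e d τ x = d • e (idealComponent hbas x) + ∑ i, quotCoord bas x i • τ i :=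
  rfl

theorem embedSnd_lie (hbas : ∀ i, bas i = LieSubmodule.Quotient.mk' I (a i))
    (hI : ∀ x y : A, ⁅x, y⁆ ∈ I) (habel : ∀ x ∈ I, ∀ y ∈ I, ⁅x, y⁆ = 0)
    (hX : ∀ (i : ι) (b : I), (((X i : MvPolynomial ι k) • b : I) : A) = ⁅(b : A), a i⁆)
    {e : I →ₗ[MvPolynomial ι k] T} {d : MvPolynomial ι k} {τ : ι → T}
    (hτ : ∀ i j, d • e (liftBracket a hI i j) =
      (X j : MvPolynomial ι k) • τ i - (X i : MvPolynomial ι k) • τ j)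
    (x y : A) :
    embedSnd hbas e d τ ⁅x, y⁆ =
      linearPoly bas y • embedSnd hbas e d τ x - linearPoly bas x • embedSnd hbas e d τ y := by
  have hc : quotCoord bas ⁅x, y⁆ = 0 := (quotCoord_eq_zero_iff bas).mpr (hI x y)
  have hW : d • e (∑ i, ∑ j, (quotCoord bas x i * quotCoord bas y j) • liftBracket a hI i j) =
      ∑ i, ∑ j, (quotCoord bas x i * quotCoord bas y j) •
        ((X j : MvPolynomial ι k) • τ i - (X i : MvPolynomial ι k) • τ j) := by
    simp only [map_sum, LinearMap.map_smul_of_tower, Finset.smul_sum, smul_comm d, hτ]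
  rw [embedSnd_apply, hc, idealComponent_lie hbas hI habel hX,
    map_sub, map_add, smul_sub, smul_add, hW, ← sum_smul_sum_sub_sum_smul_sum, embedSnd_apply,
    embedSnd_apply, linearPoly_apply, linearPoly_apply]
  simp only [Pi.zero_apply, zero_smul, Finset.sum_const_zero, add_zero, map_smul, smul_add,
    smul_comm d]
  abel

theorem eq_zero_of_linearPoly_eq_zero_of_embedSnd_eq_zero [IsDomain k]
    [Module.IsTorsionFree (MvPolynomial ι k) T]
    (hbas : ∀ i, bas i = LieSubmodule.Quotient.mk' I (a i)) {e : I →ₗ[MvPolynomial ι k] T}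
    (he : Function.Injective e) {d : MvPolynomial ι k} (hd : d ≠ 0) (τ : ι → T) {x : A}
    (h₁ : linearPoly bas x = 0) (h₂ : embedSnd hbas e d τ x = 0) : x = 0 := by
  have hc := quotCoord_eq_zero_of_linearPoly_eq_zero bas h₁
  simp only [embedSnd_apply, hc, Pi.zero_apply, zero_smul, Finset.sum_const_zero, add_zero,
    smul_eq_zero_iff_right hd] at h₂
  have hp : idealComponent hbas x = 0 := he (h₂.trans (map_zero e).symm)
  rw [← sum_quotCoord_smul_add_idealComponent hbas x, hc, hp]
  simp

end Splitting

/-- Every finitely generated metabelian Lie `U`-algebra embeds into a matrix metabelian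
Lie algebra `R × (Fin s → R)`, with first components of the images being `k`-linear
combinations of the variables. -/
theorem fg_U_algebra_embeds_matLie {k A : Type*} [Field k] [LieRing A] [LieAlgebra k A]
    (hA : IsMetabelian A)
    (hfg : ∃ S : Finset A, LieSubalgebra.lieSpan k A ↑S = ⊤)
    (habel : ∀ x ∈ fittingRadical k A, ∀ y ∈ fittingRadical k A, ⁅x, y⁆ = 0)
    (r : ℕ) (a : Fin r → A)
    (bas : Module.Basis (Fin r) k (A ⧸ fittingRadical k A))
    (hbas : ∀ i, bas i = LieSubmodule.Quotient.mk' (fittingRadical k A) (a i))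
    [inst : Module (MvPolynomial (Fin r) k) ↥(fittingRadical k A)]
    (hX : ∀ (i : Fin r) (b : ↥(fittingRadical k A)),
      (((MvPolynomial.X i : MvPolynomial (Fin r) k) • b : ↥(fittingRadical k A)) : A) = ⁅(b : A), a i⁆)
    (hC : ∀ (c : k) (b : ↥(fittingRadical k A)),
      ((MvPolynomial.C c : MvPolynomial (Fin r) k) • b : ↥(fittingRadical k A)) = c • b)
    (htf : ∀ (f : MvPolynomial (Fin r) k) (b : ↥(fittingRadical k A)),
      f ≠ 0 → b ≠ 0 → f • b ≠ 0) :
    ∃ (s : ℕ)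
      (γ : A →ₗ⁅k⁆ (MvPolynomial (Fin r) k × (Fin s → MvPolynomial (Fin r) k))),
      Function.Injective γ ∧
      ∀ x : A, (γ x).1 ∈
        Submodule.span k (Set.range (MvPolynomial.X : Fin r → MvPolynomial (Fin r) k)) := by
  obtain ⟨S, hS⟩ := hfg
  have hI := hA.lie_mem_fittingRadical (k := k)
  have : IsScalarTower k (MvPolynomial (Fin r) k) (fittingRadical k A) :=
    .of_algebraMap_smul fun c b => by rw [MvPolynomial.algebraMap_eq, hC]
  have : NoZeroSMulDivisors (MvPolynomial (Fin r) k) (fittingRadical k A) :=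
    ⟨fun {f b} h => by by_contra! hfb; exact htf f b hfb.1 hfb.2 h⟩
  have : Module.Finite (MvPolynomial (Fin r) k) (fittingRadical k A) :=
    Module.finite_def.mpr <| Submodule.fg_def.mpr ⟨_, (Set.finite_range _).union
      (S.finite_toSet.image _), span_liftBracket_union_idealComponent_eq_top hbas hI habel hX hS⟩
  obtain ⟨s, e, he⟩ :=
    Module.exists_injective_fin_pi_of_isTorsionFree (MvPolynomial (Fin r) k) (fittingRadical k A)
  obtain ⟨d, hd, τ, hτ⟩ := exists_smul_liftBracket_eq hI hX e
  refine ⟨s, matLieHom (linearPoly bas) (embedSnd hbas e d τ)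
      (fun x y => linearPoly_eq_zero_of_mem bas (hI x y)) (embedSnd_lie hbas hI habel hX hτ),
    matLieHom_injective _ _ fun x h₁ h₂ =>
      eq_zero_of_linearPoly_eq_zero_of_embedSnd_eq_zero hbas he hd τ h₁ h₂,
    linearPoly_mem_span_X bas⟩
end
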